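/- Let 𝔸 : ℝ² → ℝ² be continuously differentiable, Λ-periodic and odd (𝔸(−x) = −𝔸(x)). Let φ : ℝ² → ℂ be continuously differentiable, ξ⋆^A-quasiperiodic, with φ(Rx) = τ·φ(x) for all x ∈ ℝ². Define ψ(x) := φ(−x). Then ψ is ξ⋆^B-quasiperiodic, satisfies ψ(Rx) = τ·ψ(x) for all x, and ∫_𝕃 conj(ψ)·(𝕎ψ) dx = ∫_𝕃 conj(φ)·(𝕎φ) dx. (Hence the coefficients θ⋆^A := ∫_𝕃 conj(φ)(𝕎φ) and θ⋆^B := ∫_𝕃 conj(ψ)(𝕎ψ) attached to the two Dirac momenta coincide.) -/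

import Mathlib

open MeasureTheory

/-- The Euclidean inner product on `ℝ²`. -/
def dot2 (x y : ℝ × ℝ) : ℝ := x.1 * y.1 + x.2 * y.2

/-- `f` is `ξ`-quasiperiodic with respect to the lattice `ℤv₁ + ℤv₂`. -/
def Quasiperiodic (v₁ v₂ ξ : ℝ × ℝ) (f : ℝ × ℝ → ℂ) : Prop :=
  ∀ (x : ℝ × ℝ) (m n : ℤ),
    f (x + ((m : ℝ) • v₁ + (n : ℝ) • v₂)) =
      Complex.exp (Complex.I * (dot2 ξ ((m : ℝ) • v₁ + (n : ℝ) • v₂) : ℂ)) * f x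

/-- The fundamental cell `𝕃 = {s₁v₁ + s₂v₂ : s₁, s₂ ∈ [0,1)}`. -/
def cell (v₁ v₂ : ℝ × ℝ) : Set (ℝ × ℝ) :=
  {x | ∃ s₁ s₂ : ℝ, s₁ ∈ Set.Ico (0 : ℝ) 1 ∧ s₂ ∈ Set.Ico (0 : ℝ) 1 ∧
    x = s₁ • v₁ + s₂ • v₂}

/-- Generator `v₁ = a(√3, 1)` of the equilateral lattice. -/
noncomputable def hex1 (a : ℝ) : ℝ × ℝ := (Real.sqrt 3 * a, a)

/-- Generator `v₂ = a(√3, −1)` of the equilateral lattice. -/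
noncomputable def hex2 (a : ℝ) : ℝ × ℝ := (Real.sqrt 3 * a, -a)

/-- The rotation `R` by `2π/3`. -/
noncomputable def Rot (x : ℝ × ℝ) : ℝ × ℝ :=
  ((-x.1 + Real.sqrt 3 * x.2) / 2, (-(Real.sqrt 3) * x.1 - x.2) / 2)

/-- `τ = e^{2πi/3}`. -/
noncomputable def tau3 : ℂ := Complex.exp (2 * Real.pi * Complex.I / 3)

/-- Divergence of a vector field `𝔸 : ℝ² → ℝ²`. -/
noncomputable def divA (𝔸 : ℝ × ℝ → ℝ × ℝ) (x : ℝ × ℝ) : ℝ :=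
  fderiv ℝ (fun y => (𝔸 y).1) x ((1 : ℝ), (0 : ℝ)) +
    fderiv ℝ (fun y => (𝔸 y).2) x ((0 : ℝ), (1 : ℝ))

/-- The magnetic operator `𝕎 = 𝔸·D_x + D_x·𝔸 = (2/i) 𝔸·∇ + (1/i)(div 𝔸)`. -/
noncomputable def Wop (𝔸 : ℝ × ℝ → ℝ × ℝ) (φ : ℝ × ℝ → ℂ) (x : ℝ × ℝ) : ℂ :=
  (2 / Complex.I) * fderiv ℝ φ x (𝔸 x) + (1 / Complex.I) * (divA 𝔸 x : ℂ) * φ x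

/-! Inversion `x ↦ -x` turns `ξ⋆^A`-quasiperiodicity into `ξ⋆^B`-quasiperiodicity because
`ξ⋆^A + ξ⋆^B = 2π (k₁ + k₂)` pairs with `Λ` in `2πℤ`, and it commutes with `R`. As `𝔸` is odd,
`div 𝔸` is even and `𝕎 (φ ∘ neg) = (𝕎 φ) ∘ neg`, so the integrand for `ψ` is the integrand for `φ`
composed with inversion. The latter is `Λ`-periodic, since the unimodular phases of `φ` cancel in
`conj φ · 𝕎 φ`; and `x ↦ v₁ + v₂ - x` maps the cell onto itself up to its null boundary, so the
cell integral of a periodic function is invariant under inversion. -/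

open Real

section Dot

variable (x y z : ℝ × ℝ) (c : ℝ)

theorem dot2_add_left : dot2 (x + y) z = dot2 x z + dot2 y z := by
  simp only [dot2, Prod.fst_add, Prod.snd_add]; ring

theorem dot2_smul_left : dot2 (c • x) y = c * dot2 x y := by
  simp only [dot2, Prod.smul_fst, Prod.smul_snd, smul_eq_mul]; ring

theorem dot2_add_right : dot2 x (y + z) = dot2 x y + dot2 x z := by
  simp only [dot2, Prod.fst_add, Prod.snd_add]; ring

theorem dot2_smul_right : dot2 x (c • y) = c * dot2 x y := by
  simp only [dot2, Prod.smul_fst, Prod.smul_snd, smul_eq_mul]; ring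

theorem dot2_neg_right : dot2 x (-y) = -dot2 x y := by
  simp only [dot2, Prod.fst_neg, Prod.snd_neg]; ring

end Dot

theorem Quasiperiodic.comp_neg {v₁ v₂ ξ ξ' : ℝ × ℝ} {φ : ℝ × ℝ → ℂ}
    (hφ : Quasiperiodic v₁ v₂ ξ φ)
    (hξ : ∀ m n : ℤ, ∃ k : ℤ, dot2 (ξ + ξ') ((m : ℝ) • v₁ + (n : ℝ) • v₂) = 2 * π * k) :
    Quasiperiodic v₁ v₂ ξ' (fun x => φ (-x)) := by
  intro x m n
  obtain ⟨k, hk⟩ := hξ m n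
  set w := (m : ℝ) • v₁ + (n : ℝ) • v₂
  have hw : ((-m : ℤ) : ℝ) • v₁ + ((-n : ℤ) : ℝ) • v₂ = -w := by push_cast; module
  have hkC : (dot2 ξ w : ℂ) + dot2 ξ' w = 2 * π * k := by
    exact_mod_cast (dot2_add_left ξ ξ' w).symm.trans hk
  show φ (-(x + w)) = _ * φ (-x)
  rw [neg_add, ← hw, hφ, hw, dot2_neg_right]
  congr 1
  exact Complex.exp_eq_exp_iff_exists_int.mpr
    ⟨-k, by push_cast; linear_combination -Complex.I * hkC⟩

section Calculus

variable {𝕜 E F : Type*} [NontriviallyNormedField 𝕜] [NormedAddCommGroup E] [NormedSpace 𝕜 E]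
  [NormedAddCommGroup F] [NormedSpace 𝕜 F]

theorem fderiv_comp_neg (f : E → F) (x : E) :
    fderiv 𝕜 (fun y => f (-y)) x = -fderiv 𝕜 f (-x) := by
  rw [show (fun y => f (-y)) = f ∘ ContinuousLinearEquiv.neg 𝕜 from rfl,
    ContinuousLinearEquiv.comp_right_fderiv]
  ext v
  simp

theorem Function.Odd.fderiv_neg {f : E → F} (hf : Function.Odd f) (x : E) :
    fderiv 𝕜 f (-x) = fderiv 𝕜 f x := by
  conv_rhs => rw [show f = fun y => -f (-y) from funext fun y => by rw [hf, neg_neg]]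
  rw [fderiv_fun_neg, fderiv_comp_neg, neg_neg]

theorem Function.Periodic.fderiv_add {f : E → F} {c : E} (hf : Function.Periodic f c) (x : E) :
    fderiv 𝕜 f (x + c) = fderiv 𝕜 f x := by
  rw [← fderiv_comp_add_right, hf.funext]

end Calculus

section MagneticOperator

variable {𝔸 : ℝ × ℝ → ℝ × ℝ}

theorem divA_neg_of_odd (h𝔸 : Function.Odd 𝔸) (x : ℝ × ℝ) : divA 𝔸 (-x) = divA 𝔸 x := by
  have h₁ : Function.Odd fun y => (𝔸 y).1 := fun y => by simp [h𝔸 y]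
  have h₂ : Function.Odd fun y => (𝔸 y).2 := fun y => by simp [h𝔸 y]
  rw [divA, divA, h₁.fderiv_neg, h₂.fderiv_neg]

theorem Wop_comp_neg (h𝔸 : Function.Odd 𝔸) (φ : ℝ × ℝ → ℂ) (x : ℝ × ℝ) :
    Wop 𝔸 (fun y => φ (-y)) x = Wop 𝔸 φ (-x) := by
  rw [Wop, Wop, fderiv_comp_neg, divA_neg_of_odd h𝔸, h𝔸 x, neg_apply, map_neg]

theorem divA_add_of_periodic {w : ℝ × ℝ} (h𝔸 : Function.Periodic 𝔸 w) (x : ℝ × ℝ) :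
    divA 𝔸 (x + w) = divA 𝔸 x := by
  have h₁ : Function.Periodic (fun y => (𝔸 y).1) w := fun y => by simp only [h𝔸 y]
  have h₂ : Function.Periodic (fun y => (𝔸 y).2) w := fun y => by simp only [h𝔸 y]
  rw [divA, divA, h₁.fderiv_add, h₂.fderiv_add]

theorem Wop_add_of_periodic {w : ℝ × ℝ} (h𝔸 : Function.Periodic 𝔸 w) (φ : ℝ × ℝ → ℂ)
    (x : ℝ × ℝ) : Wop 𝔸 φ (x + w) = Wop 𝔸 (fun y => φ (y + w)) x := by
  rw [Wop, Wop, fderiv_comp_add_right, divA_add_of_periodic h𝔸, h𝔸 x]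

theorem Wop_const_mul (c : ℂ) (φ : ℝ × ℝ → ℂ) (x : ℝ × ℝ) :
    Wop 𝔸 (fun y => c * φ y) x = c * Wop 𝔸 φ x := by
  rw [Wop, Wop, show (fun y => c * φ y) = c • φ from rfl, fderiv_const_smul_field]
  simp only [smul_apply, smul_eq_mul, Pi.smul_apply]
  ring

theorem periodic_conj_mul_Wop {w : ℝ × ℝ} {c : ℂ} {φ : ℝ × ℝ → ℂ}
    (h𝔸 : Function.Periodic 𝔸 w) (hφ : ∀ y, φ (y + w) = c * φ y) (hc : ‖c‖ = 1) :
    Function.Periodic (fun y => starRingEnd ℂ (φ y) * Wop 𝔸 φ y) w := by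
  intro y
  have hcc : starRingEnd ℂ c * c = 1 := by rw [Complex.conj_mul', hc]; norm_num
  simp only
  rw [Wop_add_of_periodic h𝔸, funext hφ, Wop_const_mul, hφ, map_mul]
  linear_combination (starRingEnd ℂ (φ y) * Wop 𝔸 φ y) * hcc

end MagneticOperator

section Cell

def latticeComb (v₁ v₂ : ℝ × ℝ) : (ℝ × ℝ) →ₗ[ℝ] ℝ × ℝ where
  toFun s := s.1 • v₁ + s.2 • v₂
  map_add' s t := by simp only [Prod.fst_add, Prod.snd_add, add_smul]; abel
  map_smul' c s := by simp only [Prod.smul_fst, Prod.smul_snd, smul_eq_mul, mul_smul,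
    RingHom.id_apply, smul_add]

@[simp]
theorem latticeComb_apply (v₁ v₂ s : ℝ × ℝ) : latticeComb v₁ v₂ s = s.1 • v₁ + s.2 • v₂ := rfl

def dualCoords (k₁ k₂ : ℝ × ℝ) : (ℝ × ℝ) →ₗ[ℝ] ℝ × ℝ where
  toFun x := (dot2 k₁ x, dot2 k₂ x)
  map_add' x y := by simp only [dot2_add_right, Prod.mk_add_mk]
  map_smul' c x := by simp only [dot2_smul_right, RingHom.id_apply, Prod.smul_mk, smul_eq_mul]

@[simp]
theorem dualCoords_apply (k₁ k₂ x : ℝ × ℝ) : dualCoords k₁ k₂ x = (dot2 k₁ x, dot2 k₂ x) := rfl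

theorem dualCoords_comp_latticeComb {v₁ v₂ k₁ k₂ : ℝ × ℝ}
    (h11 : dot2 k₁ v₁ = 1) (h12 : dot2 k₁ v₂ = 0) (h21 : dot2 k₂ v₁ = 0) (h22 : dot2 k₂ v₂ = 1) :
    dualCoords k₁ k₂ ∘ₗ latticeComb v₁ v₂ = LinearMap.id := by
  refine LinearMap.ext fun s => ?_
  simp [dot2_add_right, dot2_smul_right, h11, h12, h21, h22]

variable {v₁ v₂ k₁ k₂ : ℝ × ℝ}

theorem cell_eq_preimage_dualCoords (h : dualCoords k₁ k₂ ∘ₗ latticeComb v₁ v₂ = LinearMap.id) :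
    cell v₁ v₂ = dualCoords k₁ k₂ ⁻¹' (Set.Ico 0 1 ×ˢ Set.Ico 0 1) := by
  have h' : latticeComb v₁ v₂ ∘ₗ dualCoords k₁ k₂ = LinearMap.id := mul_eq_one_comm.mp h
  ext x
  constructor
  · rintro ⟨s₁, s₂, hs₁, hs₂, rfl⟩
    have := LinearMap.congr_fun h (s₁, s₂)
    simp only [LinearMap.comp_apply, LinearMap.id_apply, latticeComb_apply] at this
    rw [Set.mem_preimage, this]
    exact ⟨hs₁, hs₂⟩
  · intro hx
    exact ⟨_, _, hx.1, hx.2, (LinearMap.congr_fun h' x).symm⟩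

theorem sub_preimage_cell_ae_eq (h : dualCoords k₁ k₂ ∘ₗ latticeComb v₁ v₂ = LinearMap.id) :
    (fun x => v₁ + v₂ - x) ⁻¹' cell v₁ v₂ =ᵐ[volume] cell v₁ v₂ := by
  have hdet : LinearMap.det (dualCoords k₁ k₂) ≠ 0 := by
    refine left_ne_zero_of_mul_eq_one (b := LinearMap.det (latticeComb v₁ v₂)) ?_
    rw [← LinearMap.det_comp, h, LinearMap.det_id]
  have hK : dualCoords k₁ k₂ (v₁ + v₂) = (1, 1) := by simpa using LinearMap.congr_fun h (1, 1)
  have hrefl : (fun x => v₁ + v₂ - x) ⁻¹' cell v₁ v₂ =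
      dualCoords k₁ k₂ ⁻¹' (Set.Ioc 0 1 ×ˢ Set.Ioc 0 1) := by
    ext x
    simp only [cell_eq_preimage_dualCoords h, Set.mem_preimage, map_sub, hK, Set.mem_prod,
      Prod.fst_sub, Prod.snd_sub, Set.mem_Ico, Set.mem_Ioc]
    constructor <;> rintro ⟨⟨_, _⟩, _, _⟩ <;> refine ⟨⟨?_, ?_⟩, ?_, ?_⟩ <;> linarith
  rw [hrefl, cell_eq_preimage_dualCoords h]
  refine (Measure.LinearMap.quasiMeasurePreserving volume _ hdet).preimage_ae_eq ?_
  rw [Measure.volume_eq_prod]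
  exact Measure.set_prod_ae_eq Ico_ae_eq_Ioc.symm Ico_ae_eq_Ioc.symm

theorem setIntegral_cell_comp_neg_of_periodic {E : Type*} [NormedAddCommGroup E] [NormedSpace ℝ E]
    (h : dualCoords k₁ k₂ ∘ₗ latticeComb v₁ v₂ = LinearMap.id) {g : ℝ × ℝ → E}
    (hg : Function.Periodic g (v₁ + v₂)) :
    ∫ x in cell v₁ v₂, g (-x) = ∫ x in cell v₁ v₂, g x := by
  calc ∫ x in cell v₁ v₂, g (-x)
      = ∫ x in (fun x => v₁ + v₂ - x) ⁻¹' cell v₁ v₂, g (v₁ + v₂ - x) := by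
        rw [setIntegral_congr_set (sub_preimage_cell_ae_eq h)]
        congr 1 with x
        rw [sub_eq_neg_add, hg]
    _ = ∫ x in cell v₁ v₂, g x :=
        (Measure.measurePreserving_sub_left volume _).setIntegral_preimage_emb
          (MeasurableEquiv.subLeft _).measurableEmbedding g _

end Cell

theorem Rot_neg (x : ℝ × ℝ) : Rot (-x) = -Rot x := by
  simp only [Rot, Prod.fst_neg, Prod.snd_neg, Prod.neg_mk]
  congr 1 <;> ring

theorem stmt8_general (a : ℝ)
    (k₁ k₂ : ℝ × ℝ)
    (hk11 : dot2 k₁ (hex1 a) = 1) (hk12 : dot2 k₁ (hex2 a) = 0)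
    (hk21 : dot2 k₂ (hex1 a) = 0) (hk22 : dot2 k₂ (hex2 a) = 1)
    (𝔸 : ℝ × ℝ → ℝ × ℝ)
    (h𝔸per : ∀ (x : ℝ × ℝ) (m n : ℤ),
      𝔸 (x + ((m : ℝ) • hex1 a + (n : ℝ) • hex2 a)) = 𝔸 x)
    (h𝔸odd : ∀ x, 𝔸 (-x) = -𝔸 x)
    (φ : ℝ × ℝ → ℂ)
    (hφqp : Quasiperiodic (hex1 a) (hex2 a)
      ((2 * Real.pi / 3) • ((2 : ℝ) • k₁ + k₂)) φ)
    (hφrot : ∀ x, φ (Rot x) = tau3 * φ x)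
    (ψ : ℝ × ℝ → ℂ) (hψ : ∀ x, ψ x = φ (-x)) :
    Quasiperiodic (hex1 a) (hex2 a) ((2 * Real.pi / 3) • (k₁ + (2 : ℝ) • k₂)) ψ ∧
    (∀ x, ψ (Rot x) = tau3 * ψ x) ∧
    (∫ x in cell (hex1 a) (hex2 a), (starRingEnd ℂ) (ψ x) * Wop 𝔸 ψ x) =
      ∫ x in cell (hex1 a) (hex2 a), (starRingEnd ℂ) (φ x) * Wop 𝔸 φ x := by
  obtain rfl : ψ = fun x => φ (-x) := funext hψ
  refine ⟨hφqp.comp_neg fun m n => ⟨m + n, ?_⟩, fun x => by simp only [← Rot_neg, hφrot], ?_⟩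
  · simp only [dot2_add_left, dot2_smul_left, dot2_add_right, dot2_smul_right,
      hk11, hk12, hk21, hk22]
    push_cast
    ring
  · have h𝔸w : Function.Periodic 𝔸 (hex1 a + hex2 a) := fun x => by simpa using h𝔸per x 1 1
    have hφw := fun x => by simpa using hφqp x 1 1
    simp_rw [Wop_comp_neg h𝔸odd]
    refine setIntegral_cell_comp_neg_of_periodic
      (dualCoords_comp_latticeComb hk11 hk12 hk21 hk22) (periodic_conj_mul_Wop h𝔸w hφw ?_)
    rw [mul_comm]
    exact Complex.norm_exp_ofReal_mul_I _

/-- In the magnetic case, inversion maps Dirac data at `ξ⋆^A` to Dirac data at `ξ⋆^B`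
and preserves the coefficient `θ⋆`, so that `θ⋆^A = θ⋆^B`. -/
theorem stmt8 (a : ℝ) (ha : 0 < a) (hdet : 2 * Real.sqrt 3 * a ^ 2 = 1)
    (k₁ k₂ : ℝ × ℝ)
    (hk11 : dot2 k₁ (hex1 a) = 1) (hk12 : dot2 k₁ (hex2 a) = 0)
    (hk21 : dot2 k₂ (hex1 a) = 0) (hk22 : dot2 k₂ (hex2 a) = 1)
    (𝔸 : ℝ × ℝ → ℝ × ℝ) (h𝔸C1 : ContDiff ℝ 1 𝔸)
    (h𝔸per : ∀ (x : ℝ × ℝ) (m n : ℤ),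
      𝔸 (x + ((m : ℝ) • hex1 a + (n : ℝ) • hex2 a)) = 𝔸 x)
    (h𝔸odd : ∀ x, 𝔸 (-x) = -𝔸 x)
    (φ : ℝ × ℝ → ℂ) (hφC1 : ContDiff ℝ 1 φ)
    (hφqp : Quasiperiodic (hex1 a) (hex2 a)
      ((2 * Real.pi / 3) • ((2 : ℝ) • k₁ + k₂)) φ)
    (hφrot : ∀ x, φ (Rot x) = tau3 * φ x)
    (ψ : ℝ × ℝ → ℂ) (hψ : ∀ x, ψ x = φ (-x)) :
    Quasiperiodic (hex1 a) (hex2 a) ((2 * Real.pi / 3) • (k₁ + (2 : ℝ) • k₂)) ψ ∧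
    (∀ x, ψ (Rot x) = tau3 * ψ x) ∧
    (∫ x in cell (hex1 a) (hex2 a), (starRingEnd ℂ) (ψ x) * Wop 𝔸 ψ x) =
      ∫ x in cell (hex1 a) (hex2 a), (starRingEnd ℂ) (φ x) * Wop 𝔸 φ x :=
  stmt8_general a k₁ k₂ hk11 hk12 hk21 hk22 𝔸 h𝔸per h𝔸odd φ hφqp hφrot ψ hψ
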